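/- For all x ∈ [1/3, 1/2], the function φ(x) := 3x²(π/3 − arccos(x/(1−x))) + 3x√(1−2x) satisfies φ(x) − 1/√3 ≥ (1/√5)(x − 1/3). -/

import Mathlib

open Metric Set MeasureTheory Pointwise

/-- The minimal width of a planar set: the least length of its orthogonal
projection onto a direction. -/
noncomputable def minWidth (K : Set (EuclideanSpace ℝ (Fin 2))) : ℝ :=
  ⨅ θ : Metric.sphere (0 : EuclideanSpace ℝ (Fin 2)) 1,
    (sSup ((fun x => (inner ℝ x θ.1 : ℝ)) '' K) - sInf ((fun x => (inner ℝ x θ.1 : ℝ)) '' K))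

/-- The inradius: radius of a largest disk contained in the set. -/
noncomputable def inradius (K : Set (EuclideanSpace ℝ (Fin 2))) : ℝ :=
  sSup {r : ℝ | ∃ c, Metric.closedBall c r ⊆ K}

/-- The area of a planar set. -/
noncomputable def area (K : Set (EuclideanSpace ℝ (Fin 2))) : ℝ := (volume K).toReal

/-- A set is an equilateral triangle if it is the convex hull of three points at
equal positive pairwise distances. -/
def IsEquilateralTriangle (E : Set (EuclideanSpace ℝ (Fin 2))) : Prop :=
  ∃ a b c : EuclideanSpace ℝ (Fin 2), dist a b = dist b c ∧ dist b c = dist c a ∧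
    0 < dist a b ∧ E = convexHull ℝ {a, b, c}

/-- Hausdorff asymmetry from equilateral triangles of the same width. -/
noncomputable def hausdorffAsym (K : Set (EuclideanSpace ℝ (Fin 2))) : ℝ :=
  sInf {d : ℝ | ∃ E, IsEquilateralTriangle E ∧ minWidth E = minWidth K ∧
    d = Metric.hausdorffDist K E / minWidth E}

/-- Fraenkel asymmetry from equilateral triangles of the same width. -/
noncomputable def fraenkelAsym (K : Set (EuclideanSpace ℝ (Fin 2))) : ℝ :=
  sInf {d : ℝ | ∃ E, IsEquilateralTriangle E ∧ minWidth E = minWidth K ∧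
    d = area (symmDiff K E) / (minWidth E)^2}

/-- The point (x, y) of the Euclidean plane. -/
noncomputable def pt (x y : ℝ) : EuclideanSpace ℝ (Fin 2) :=
  (WithLp.equiv 2 (Fin 2 → ℝ)).symm ![x, y]

/-- The function φ of the paper. -/
noncomputable def phi (x : ℝ) : ℝ :=
  3 * x ^ 2 * (Real.pi / 3 - Real.arccos (x / (1 - x))) + 3 * x * Real.sqrt (1 - 2 * x)

/-- The function ψ of the paper. -/
noncomputable def psi (x y : ℝ) : ℝ :=
  Real.pi * x ^ 2 + 2 * x * Real.sqrt (1 - 2 * x) - 2 * x ^ 2 * Real.arccos (x / (1 - x))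
    + x * Real.sqrt (y ^ 2 - x ^ 2) - x ^ 2 * Real.arccos (x / y)


lemma phi_hasDerivAt {x : ℝ} (h1 : (1:ℝ)/3 < x) (h2 : x < 1/2) :
    HasDerivAt phi
      (6 * x * (Real.pi / 3 - Real.arccos (x / (1 - x)))
        + 3 * (1 - 2*x) * Real.sqrt (1 - 2*x) / (1 - x)) x := by
  have hx0 : (0:ℝ) < x := by linarith
  have hx1 : (0:ℝ) < 1 - x := by linarith
  have hr : (0:ℝ) < 1 - 2*x := by linarith
  have hrs : (0:ℝ) < Real.sqrt (1 - 2*x) := Real.sqrt_pos.2 hr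
  set u : ℝ := x / (1 - x) with hu
  have hune1 : u ≠ 1 := by
    rw [hu]
    intro h
    rw [div_eq_one_iff_eq hx1.ne'] at h
    linarith
  have hunem1 : u ≠ -1 := by
    have : 0 < u := div_pos hx0 hx1
    linarith
  -- sqrt(1 - u^2) = sqrt(1-2x)/(1-x)
  have huval : 1 - u^2 = (1 - 2*x) / (1 - x)^2 := by
    rw [hu]; field_simp; ring
  have hsud : Real.sqrt (1 - u^2) = Real.sqrt (1 - 2*x) / (1 - x) := by
    rw [huval, Real.sqrt_div hr.le, Real.sqrt_sq hx1.le]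
  -- derivative of u
  have hdu : HasDerivAt (fun y : ℝ => y / (1 - y)) (1 / (1 - x)^2) x := by
    have := (hasDerivAt_id x).div ((hasDerivAt_const x 1).sub (hasDerivAt_id x)) hx1.ne'
    refine this.congr_deriv ?_
    simp only [Pi.sub_apply, id]
    ring
  have hdarccos : HasDerivAt (fun y : ℝ => Real.arccos (y / (1 - y)))
      (-(1 / Real.sqrt (1 - u^2)) * (1 / (1 - x)^2)) x :=
    by have h := (Real.hasDerivAt_arccos hunem1 hune1).comp x hdu; exact h
  have hdsq : HasDerivAt (fun y : ℝ => Real.sqrt (1 - 2*y))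
      (1 / (2 * Real.sqrt (1 - 2*x)) * (-2)) x := by
    have h2 : HasDerivAt (fun y : ℝ => 1 - 2*y) (-2) x := by
      simpa using ((hasDerivAt_id x).const_mul 2).const_sub 1
    exact (Real.hasDerivAt_sqrt hr.ne').comp x h2
  have hterm1 : HasDerivAt (fun y : ℝ => 3 * y ^ 2 * (Real.pi / 3 - Real.arccos (y / (1 - y))))
      (6 * x * (Real.pi / 3 - Real.arccos u)
        + 3 * x ^ 2 * (-(-(1 / Real.sqrt (1 - u^2)) * (1 / (1 - x)^2)))) x := by
    have ha : HasDerivAt (fun y : ℝ => 3 * y ^ 2) (6 * x) x := by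
      have := (hasDerivAt_pow 2 x).const_mul 3
      refine this.congr_deriv ?_; ring
    have hb : HasDerivAt (fun y : ℝ => Real.pi / 3 - Real.arccos (y / (1 - y)))
        (-(-(1 / Real.sqrt (1 - u^2)) * (1 / (1 - x)^2))) x := hdarccos.const_sub _
    exact ha.mul hb
  have hterm2 : HasDerivAt (fun y : ℝ => 3 * y * Real.sqrt (1 - 2*y))
      (3 * Real.sqrt (1 - 2*x) + 3 * x * (1 / (2 * Real.sqrt (1 - 2*x)) * (-2))) x := by
    have ha : HasDerivAt (fun y : ℝ => 3 * y) 3 x := by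
      simpa using (hasDerivAt_id x).const_mul 3
    exact ha.mul hdsq
  have := hterm1.add hterm2
  refine this.congr_deriv (Eq.symm ?_)
  rw [hsud]
  have hsq : Real.sqrt (1 - 2*x) ^ 2 = 1 - 2*x := Real.sq_sqrt hr.le
  set s := Real.sqrt (1 - 2*x) with hs
  field_simp
  ring_nf
  linear_combination (-9*x) * hsq


lemma arccos_le_aux {u : ℝ} (hu0 : 0 ≤ u) (hu1 : u ≤ 1) :
    Real.arccos u ≤ Real.pi / 2 - u := by
  rw [Real.arccos_eq_pi_div_two_sub_arcsin]
  have h : u ≤ Real.arcsin u := by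
    nth_rewrite 1 [← Real.sin_arcsin (by linarith) hu1]
    exact Real.sin_le (Real.arcsin_nonneg.2 hu0)
  linarith

lemma inv_sqrt5 : 1 / Real.sqrt 5 < 9 / 20 := by
  have h5 : (20/9 : ℝ) < Real.sqrt 5 := by
    have h := Real.sq_sqrt (by norm_num : (0:ℝ) ≤ 5)
    nlinarith [Real.sqrt_nonneg 5]
  rw [div_lt_div_iff₀ (by positivity) (by norm_num)]
  nlinarith

lemma phi_deriv_pos {x : ℝ} (h1 : (1:ℝ)/3 < x) (h2 : x < 1/2) :
    1 / Real.sqrt 5 < 6 * x * (Real.pi / 3 - Real.arccos (x / (1 - x)))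
        + 3 * (1 - 2*x) * Real.sqrt (1 - 2*x) / (1 - x) := by
  have hx0 : (0:ℝ) < x := by linarith
  have hx1 : (0:ℝ) < 1 - x := by linarith
  have hr : (0:ℝ) < 1 - 2*x := by linarith
  set s := Real.sqrt (1 - 2*x) with hs
  have hsq : s ^ 2 = 1 - 2*x := Real.sq_sqrt hr.le
  have hs0 : 0 < s := Real.sqrt_pos.2 hr
  have hu0 : (0:ℝ) ≤ x / (1 - x) := by positivity
  have hu1 : x / (1 - x) ≤ 1 := by
    rw [div_le_one hx1]; linarith
  have harc := arccos_le_aux hu0 hu1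
  have hpi : Real.pi < 3.15 := Real.pi_lt_d2
  have h5 := inv_sqrt5
  -- lower bound the first term
  have hterm : 6 * x * (x / (1 - x) - Real.pi / 6) ≤
      6 * x * (Real.pi / 3 - Real.arccos (x / (1 - x))) := by
    apply mul_le_mul_of_nonneg_left _ (by linarith)
    linarith
  have hsle : s ^ 2 ≤ 1/3 := by rw [hsq]; linarith
  have key : 9/20 + 3.15 * x < 6 * x * (x / (1 - x)) + 3 * (1 - 2*x) * s / (1 - x) := by
    rw [show 6 * x * (x / (1 - x)) + 3 * (1 - 2*x) * s / (1 - x)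
        = (6 * x * x + 3 * (1 - 2*x) * s) / (1 - x) by field_simp,
      lt_div_iff₀ hx1, ← hsq]
    nlinarith [sq_nonneg (s - 1/2), sq_nonneg (s*s - s/2), mul_nonneg hs0.le (sq_nonneg (s - 1/2)),
      sq_nonneg s, hs0.le, sq_nonneg (s - 0.48), mul_nonneg hs0.le (sq_nonneg (s - 0.48))]
  have hxpi : 6 * x * (x / (1 - x) - Real.pi / 6) = 6 * x * (x / (1-x)) - Real.pi * x := by ring
  nlinarith [hterm]

lemma phi_one_third : phi (1/3) = 1 / Real.sqrt 3 := by
  have h12 : (1/3:ℝ) / (1 - 1/3) = 1/2 := by norm_num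
  have harc : Real.arccos (1/2) = Real.pi / 3 := by
    rw [← Real.cos_pi_div_three]
    exact Real.arccos_cos (by positivity) (by linarith [Real.pi_pos])
  have hsqrt : Real.sqrt (1 - 2 * (1/3)) = 1 / Real.sqrt 3 := by
    rw [show (1 - 2 * (1/3) : ℝ) = 3⁻¹ by norm_num, Real.sqrt_inv, one_div]
  rw [phi, h12, harc, hsqrt]
  ring

/-- Quantitative growth of φ away from its minimum. -/
theorem phi_quantitative_lower_bound :
    ∀ x ∈ Set.Icc (1 / 3 : ℝ) (1 / 2),
      phi x - 1 / Real.sqrt 3 ≥ (1 / Real.sqrt 5) * (x - 1 / 3) := by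
  intro x hx
  obtain ⟨hx1, hx2⟩ := hx
  have h13mem : (1/3 : ℝ) ∈ Set.Icc (1/3 : ℝ) (1/2) := Set.left_mem_Icc.2 (by norm_num)
  have hcont : ContinuousOn phi (Set.Icc (1/3 : ℝ) (1/2)) := by
    have hne : ∀ y ∈ Set.Icc (1/3 : ℝ) (1/2), 1 - y ≠ 0 := by
      intro y hy
      have := hy.2
      intro hc
      have : y = 1 := by linarith
      linarith [hy.2, this]
    unfold phi
    apply ContinuousOn.add
    · apply ContinuousOn.mul
      · exact (continuous_const.mul (continuous_pow 2)).continuousOn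
      · exact continuousOn_const.sub (Real.continuous_arccos.comp_continuousOn
          (ContinuousOn.div continuousOn_id (continuousOn_const.sub continuousOn_id) hne))
    · exact ((continuous_const.mul continuous_id).mul
        (Real.continuous_sqrt.comp (by continuity))).continuousOn
  set F : ℝ → ℝ := fun y => phi y - (1 / Real.sqrt 5) * y with hF
  have hFcont : ContinuousOn F (Set.Icc (1/3 : ℝ) (1/2)) :=
    hcont.sub (continuous_const.mul continuous_id).continuousOn
  have hmono : StrictMonoOn F (Set.Icc (1/3 : ℝ) (1/2)) := by
    apply strictMonoOn_of_deriv_pos (convex_Icc _ _) hFcont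
    intro y hy
    rw [interior_Icc] at hy
    have hlin : HasDerivAt (fun y : ℝ => 1 / Real.sqrt 5 * y) (1 / Real.sqrt 5) y := by
      simpa using (hasDerivAt_id y).const_mul (1 / Real.sqrt 5)
    have hd : HasDerivAt F
        (6 * y * (Real.pi / 3 - Real.arccos (y / (1 - y)))
          + 3 * (1 - 2*y) * Real.sqrt (1 - 2*y) / (1 - y) - 1 / Real.sqrt 5) y :=
      (phi_hasDerivAt hy.1 hy.2).sub hlin
    rw [hd.deriv]
    have := phi_deriv_pos hy.1 hy.2
    linarith
  rcases eq_or_lt_of_le hx1 with h | h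
  · rw [← h, phi_one_third]
    simp
  · have hlt := hmono h13mem ⟨hx1, hx2⟩ h
    simp only [hF] at hlt
    have h13 := phi_one_third
    have hexp : (1 / Real.sqrt 5) * (x - 1/3)
        = (1 / Real.sqrt 5) * x - (1 / Real.sqrt 5) * (1/3) := by ring
    rw [ge_iff_le, hexp]
    linarith
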